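/- Let $X \in C^2([0,T]^2;\mathbb{R}^d)$ and define the symmetrized 2D signature by $\langle \mathbf{S}^{\mathrm{Sym}}_{\mathbf{s}\mathbf{t}}(X), w\rangle = \sum_{\nu\in\Sigma_n}\langle \mathbf{S}_{\mathbf{s}\mathbf{t}}(X),(w,\nu)\rangle$ for a word $w$ of length $n$. Then for $s_1 \le u_1 \le t_1$, the Chen relation holds: $\langle \mathbf{S}^{\mathrm{Sym}}_{\mathbf{s}\mathbf{t}}(X), w\rangle = \sum_{k=0}^{n} \langle \mathbf{S}^{\mathrm{Sym}}_{(s_1,s_2),(u_1,t_2)}(X), (w_1\cdots w_k)\rangle\,\langle \mathbf{S}^{\mathrm{Sym}}_{(u_1,s_2),(t_1,t_2)}(X), (w_{k+1}\cdots w_n)\rangle$, where the empty-word coefficients equal 1. -/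

import Mathlib

open MeasureTheory

/-- The mixed partial derivative `∂²f/∂r₁∂r₂`. -/
noncomputable def d12 (f : ℝ × ℝ → ℝ) (p : ℝ × ℝ) : ℝ :=
  deriv (fun a => deriv (fun b => f (a, b)) p.2) p.1

/-- The 1D simplex `Δ_{a,b}^n`. -/
def simplex (a b : ℝ) (n : ℕ) : Set (Fin n → ℝ) :=
  {r | (∀ i, a ≤ r i ∧ r i ≤ b) ∧ ∀ i j : Fin n, i ≤ j → r i ≤ r j}

/-- The 2D simplex `Δ^n_{[s,t]}`: `n`-tuples of points of the rectangle, increasing in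
both coordinates (recorded as a pair of increasing coordinate sequences). -/
def simplex2 (s1 t1 s2 t2 : ℝ) (n : ℕ) : Set ((Fin n → ℝ) × (Fin n → ℝ)) :=
  {p | p.1 ∈ simplex s1 t1 n ∧ p.2 ∈ simplex s2 t2 n}

/-- The full 2D signature coefficient
`⟨S_{s,t}(X), (w, ν)⟩ = ∫_{Δⁿ_{[s,t]}} ∏ᵢ ∂₁₂X^{wᵢ}(r₁ⁱ, r₂^{ν(i)})`. -/
noncomputable def sigFull {d : ℕ} (X : Fin d → ℝ × ℝ → ℝ) (s1 s2 t1 t2 : ℝ)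
    {n : ℕ} (w : Fin n → Fin d) (ν : Equiv.Perm (Fin n)) : ℝ :=
  ∫ p in simplex2 s1 t1 s2 t2 n, ∏ i, d12 (X (w i)) (p.1 i, p.2 (ν i))

/-- The symmetrized 2D signature `⟨S^Sym,(w)⟩ = ∑_ν ⟨S,(w,ν)⟩`. -/
noncomputable def sigSym {d : ℕ} (X : Fin d → ℝ × ℝ → ℝ) (s1 s2 t1 t2 : ℝ)
    {n : ℕ} (w : Fin n → Fin d) : ℝ :=
  ∑ ν : Equiv.Perm (Fin n), sigFull X s1 s2 t1 t2 w ν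

/-! The second coordinates enter `S^Sym` only through the sum over `ν`, and summing the integral
of `y ↦ h (y ∘ ν)` over `Δ_{[s₂,t₂]}` over all permutations `ν` gives the integral of `h` over the
cube `[s₂,t₂]ⁿ`, since the sets `{y | y ∘ ν⁻¹ increasing}` tile the cube up to null sets. By
Fubini the cube integral factorises, so `⟨S^Sym_{s,t}, w⟩` is the one-parameter iterated
integral `∫_{Δ_{[s₁,t₁]}} ∏ᵢ g_{wᵢ}(rᵢ)` with `g_j(x) = ∫_{s₂}^{t₂} ∂₁₂X^j(x, y) dy`. Chen's
relation for such iterated integrals follows by cutting the simplex according to how many of the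
points lie below `u₁`: the `k`-th piece is `Δ^k_{[s₁,u₁]} × Δ^{n-k}_{[u₁,t₁]}`, and distinct
pieces meet in a null set. -/

open Set

theorem isClosed_simplex (a b : ℝ) (n : ℕ) : IsClosed (simplex a b n) := by
  simp only [simplex, ofPred_and, ofPred_forall]
  exact ((isClosed_iInter fun i => (isClosed_le continuous_const (continuous_apply i)).inter
    (isClosed_le (continuous_apply i) continuous_const))).inter
    (isClosed_iInter fun i => isClosed_iInter fun j => isClosed_iInter fun _ =>
      isClosed_le (continuous_apply i) (continuous_apply j))

theorem simplex_subset_pi (a b : ℝ) (n : ℕ) : simplex a b n ⊆ univ.pi fun _ => Icc a b :=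
  fun _ hr i _ => hr.1 i

theorem isCompact_simplex (a b : ℝ) (n : ℕ) : IsCompact (simplex a b n) :=
  (isCompact_univ_pi fun _ => isCompact_Icc).of_isClosed_subset (isClosed_simplex a b n)
    (simplex_subset_pi a b n)

theorem measurableSet_simplex (a b : ℝ) (n : ℕ) : MeasurableSet (simplex a b n) :=
  (isClosed_simplex a b n).measurableSet

theorem Fin.val_lt_card_filter_iff {n : ℕ} {P : Fin n → Prop} [DecidablePred P]
    (hP : ∀ i j, i ≤ j → P j → P i) (i : Fin n) : (i : ℕ) < (Finset.univ.filter P).card ↔ P i := by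
  constructor
  · intro hi
    by_contra hPi
    have : (Finset.univ.filter P).card ≤ (Finset.Iio i).card :=
      Finset.card_le_card fun j hj => Finset.mem_Iio.2 <| lt_of_not_ge fun hij =>
        hPi (hP i j hij (Finset.mem_filter.1 hj).2)
    rw [Fin.card_Iio] at this
    omega
  · intro hPi
    have : (Finset.Iic i).card ≤ (Finset.univ.filter P).card :=
      Finset.card_le_card fun j hj => Finset.mem_filter.2
        ⟨Finset.mem_univ _, hP j i (Finset.mem_Iic.1 hj) hPi⟩
    rw [Fin.card_Iic] at this
    omega

theorem volume_setOf_apply_eq_apply {n : ℕ} {i j : Fin n} (hij : i ≠ j) :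
    volume {y : Fin n → ℝ | y i = y j} = 0 := by
  let L : (Fin n → ℝ) →ₗ[ℝ] ℝ :=
    LinearMap.proj (R := ℝ) (φ := fun _ : Fin n => ℝ) i - LinearMap.proj j
  refine measure_mono_null (fun y (hy : y i = y j) => (sub_eq_zero.2 hy : L y = 0))
    (Measure.addHaar_submodule _ (LinearMap.ker L) fun h => ?_)
  have : L (Pi.single i 1) = 0 := by rw [← LinearMap.mem_ker, h]; trivial
  simp [L, Pi.single_eq_of_ne hij.symm] at this

theorem volume_setOf_not_injective (n : ℕ) :
    volume {y : Fin n → ℝ | ¬ Function.Injective y} = 0 := by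
  have : {y : Fin n → ℝ | ¬ Function.Injective y} ⊆ ⋃ i, ⋃ j, ⋃ (_ : i ≠ j), {y | y i = y j} := by
    intro y hy
    simp only [Function.Injective, not_forall] at hy
    obtain ⟨i, j, hval, hne⟩ := hy
    exact mem_iUnion₂.2 ⟨i, j, mem_iUnion.2 ⟨hne, hval⟩⟩
  exact measure_mono_null this <| measure_iUnion_null fun i => measure_iUnion_null fun j =>
    measure_iUnion_null fun hij => volume_setOf_apply_eq_apply hij

def simplexPiece (a u b : ℝ) (n k : ℕ) : Set (Fin n → ℝ) :=
  {r | r ∈ simplex a b n ∧ ∀ i : Fin n, ((i : ℕ) < k → r i ≤ u) ∧ (k ≤ (i : ℕ) → u ≤ r i)}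

def finAppendMeasurableEquiv {α : Type*} [MeasurableSpace α] {k m n : ℕ} (h : k + m = n) :
    (Fin k → α) × (Fin m → α) ≃ᵐ (Fin n → α) :=
  (MeasurableEquiv.sumPiEquivProdPi fun _ => α).symm.trans
    (MeasurableEquiv.piCongrLeft (fun _ => α) (finSumFinEquiv.trans (finCongr h)))

section Append

variable {α : Type*} [MeasurableSpace α] {k m n : ℕ} (h : k + m = n) (x : (Fin k → α) × (Fin m → α))

@[simp]
theorem finAppendMeasurableEquiv_apply_castAdd (i : Fin k) :
    finAppendMeasurableEquiv h x (Fin.cast h (Fin.castAdd m i)) = x.1 i :=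
  MeasurableEquiv.piCongrLeft_apply_apply (β := fun _ => α)
    (finSumFinEquiv.trans (finCongr h)) ((MeasurableEquiv.sumPiEquivProdPi _).symm x) (.inl i)

@[simp]
theorem finAppendMeasurableEquiv_apply_natAdd (j : Fin m) :
    finAppendMeasurableEquiv h x (Fin.cast h (Fin.natAdd k j)) = x.2 j :=
  MeasurableEquiv.piCongrLeft_apply_apply (β := fun _ => α)
    (finSumFinEquiv.trans (finCongr h)) ((MeasurableEquiv.sumPiEquivProdPi _).symm x) (.inr j)

end Append

theorem measurePreserving_finAppendMeasurableEquiv {α : Type*} [MeasureSpace α]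
    [SigmaFinite (volume : Measure α)] {k m n : ℕ} (h : k + m = n) :
    MeasurePreserving (finAppendMeasurableEquiv (α := α) h) volume volume :=
  (volume_measurePreserving_piCongrLeft (fun _ => α) (finSumFinEquiv.trans (finCongr h))).comp
    (volume_measurePreserving_sumPiEquivProdPi_symm _)

theorem finAppendMeasurableEquiv_mem_simplexPiece {a u b : ℝ} (hau : a ≤ u) (hub : u ≤ b)
    {k m n : ℕ} (h : k + m = n) (x : (Fin k → ℝ) × (Fin m → ℝ)) :
    finAppendMeasurableEquiv h x ∈ simplexPiece a u b n k ↔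
      x.1 ∈ simplex a u k ∧ x.2 ∈ simplex u b m := by
  have hcross : ∀ (i : Fin k) (j : Fin m), Fin.castAdd m i ≤ Fin.natAdd k j := fun i j =>
    Fin.le_def.2 <| by rw [Fin.val_castAdd, Fin.val_natAdd]; omega
  have hcross' : ∀ (i : Fin k) (j : Fin m), ¬ Fin.natAdd k j ≤ Fin.castAdd m i := fun i j =>
    Fin.le_def.not.2 <| by rw [Fin.val_castAdd, Fin.val_natAdd]; omega
  have hlt : ∀ i : Fin k, ¬ k ≤ (i : ℕ) := fun i => by omega
  simp only [simplexPiece, simplex, mem_ofPred_eq,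
    ← (finSumFinEquiv.trans (finCongr h)).forall_congr_right, Sum.forall, Equiv.trans_apply,
    finSumFinEquiv_apply_left, finSumFinEquiv_apply_right, finCongr_apply,
    finAppendMeasurableEquiv_apply_castAdd, finAppendMeasurableEquiv_apply_natAdd,
    Fin.cast_le_cast, hcross, hcross', forall_const, IsEmpty.forall_iff, implies_true,
    Fin.natAdd_le_natAdd_iff, true_and, and_true, Fin.val_cast, Fin.val_castAdd, Fin.val_natAdd,
    Fin.is_lt, hlt, add_lt_iff_neg_left, not_lt_zero, le_add_iff_nonneg_right, zero_le]
  constructor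
  · rintro ⟨⟨⟨hb₁, hb₂⟩, hm₁, hm₂⟩, hu₁, hu₂⟩
    exact ⟨⟨fun i => ⟨(hb₁ i).1, hu₁ i⟩, fun i => (hm₁ i).1⟩, fun j => ⟨hu₂ j, (hb₂ j).2⟩, hm₂⟩
  · rintro ⟨⟨hp, hpm⟩, hq, hqm⟩
    exact ⟨⟨⟨fun i => ⟨(hp i).1, (hp i).2.trans hub⟩, fun j => ⟨hau.trans (hq j).1, (hq j).2⟩⟩,
      fun i => ⟨hpm i, fun j => (hp i).2.trans (hq j).1⟩, hqm⟩,
      fun i => (hp i).2, fun j => (hq j).1⟩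

theorem iUnion_simplexPiece (a u b : ℝ) (n : ℕ) :
    ⋃ k : Fin (n + 1), simplexPiece a u b n k = simplex a b n := by
  classical
  refine Subset.antisymm (iUnion_subset fun k r hr => hr.1) fun r hr => ?_
  have hk := Fin.val_lt_card_filter_iff (P := fun i => r i < u)
    (fun i j hij hj => (hr.2 i j hij).trans_lt hj)
  refine mem_iUnion.2 ⟨⟨(Finset.univ.filter fun i => r i < u).card,
    Nat.lt_succ_of_le (Finset.card_le_univ _ |>.trans_eq (Fintype.card_fin n))⟩,
    hr, fun i => ⟨fun hi => ((hk i).1 hi).le, fun hi => not_lt.1 fun hri => ?_⟩⟩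
  exact (not_lt.2 hi) ((hk i).2 hri)

theorem measurableSet_simplexPiece (a u b : ℝ) (n k : ℕ) :
    MeasurableSet (simplexPiece a u b n k) := by
  refine IsClosed.measurableSet ?_
  simp only [simplexPiece, ofPred_and, ofPred_forall, ofPred_mem_eq]
  exact (isClosed_simplex a b n).inter <| isClosed_iInter fun i =>
    (isClosed_iInter fun _ => isClosed_le (continuous_apply i) continuous_const).inter
      (isClosed_iInter fun _ => isClosed_le continuous_const (continuous_apply i))

theorem pairwise_aedisjoint_simplexPiece (a u b : ℝ) (n : ℕ) :
    Pairwise (Function.onFun (AEDisjoint volume)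
      fun k : Fin (n + 1) => simplexPiece a u b n k) := by
  intro k l hkl
  wlog hlt : k < l generalizing k l
  · exact (this hkl.symm (lt_of_le_of_ne (not_lt.1 hlt) hkl.symm)).symm
  have hkn : (k : ℕ) < n := lt_of_lt_of_le hlt (Nat.lt_succ_iff.1 l.isLt)
  have hnull : volume {r : Fin n → ℝ | r ⟨k, hkn⟩ = u} = 0 := by
    rw [volume_pi]; exact Measure.pi_hyperplane _ _ _
  refine measure_mono_null (fun r hr => ?_) hnull
  exact le_antisymm ((hr.2.2 ⟨k, hkn⟩).1 hlt) ((hr.1.2 ⟨k, hkn⟩).2 le_rfl)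

section IteratedIntegral

variable {𝕜 : Type*} [RCLike 𝕜]

theorem integrableOn_simplex_prod {a b : ℝ} {n : ℕ} {g : Fin n → ℝ → 𝕜}
    (hg : ∀ i, IntegrableOn (g i) (Icc a b)) :
    IntegrableOn (fun r => ∏ i, g i (r i)) (simplex a b n) := by
  refine IntegrableOn.mono_set ?_ (simplex_subset_pi a b n)
  rw [IntegrableOn, volume_pi, Measure.restrict_pi_pi]
  exact Integrable.fintype_prod hg

theorem setIntegral_simplexPiece_prod {a u b : ℝ} (hau : a ≤ u) (hub : u ≤ b) {k m n : ℕ}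
    (h : k + m = n) (g : Fin n → ℝ → 𝕜) :
    ∫ r in simplexPiece a u b n k, ∏ i, g i (r i) =
      (∫ p in simplex a u k, ∏ i, g (Fin.cast h (Fin.castAdd m i)) (p i)) *
        ∫ q in simplex u b m, ∏ j, g (Fin.cast h (Fin.natAdd k j)) (q j) := by
  set J := finAppendMeasurableEquiv (α := ℝ) h
  have hpre : J ⁻¹' simplexPiece a u b n k = simplex a u k ×ˢ simplex u b m := by
    ext x; exact finAppendMeasurableEquiv_mem_simplexPiece hau hub h x
  have hsplit : ∀ x, ∏ i, g i (J x i) =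
      (∏ i, g (Fin.cast h (Fin.castAdd m i)) (x.1 i)) *
        ∏ j, g (Fin.cast h (Fin.natAdd k j)) (x.2 j) := by
    intro x
    rw [← (finSumFinEquiv.trans (finCongr h)).prod_comp, Fintype.prod_sum_type]
    simp [J]
  calc ∫ r in simplexPiece a u b n k, ∏ i, g i (r i)
      = ∫ x in J ⁻¹' simplexPiece a u b n k, ∏ i, g i (J x i) :=
        ((measurePreserving_finAppendMeasurableEquiv h).setIntegral_preimage_emb
          J.measurableEmbedding _ _).symm
    _ = _ := by
        rw [hpre, Measure.volume_eq_prod, ← setIntegral_prod_mul]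
        simp only [hsplit]

theorem setIntegral_simplex_prod_eq_sum {a u b : ℝ} (hau : a ≤ u) (hub : u ≤ b) {n : ℕ}
    {g : Fin n → ℝ → 𝕜} (hg : ∀ i, IntegrableOn (g i) (Icc a b)) :
    ∫ r in simplex a b n, ∏ i, g i (r i) =
      ∑ k : Fin (n + 1),
        (∫ p in simplex a u k, ∏ i, g (Fin.castLE (Nat.lt_succ_iff.mp k.isLt) i) (p i)) *
          ∫ q in simplex u b (n - k), ∏ j : Fin (n - k),
            g ⟨k + j, Nat.lt_sub_iff_add_lt'.1 j.isLt⟩ (q j) := by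
  rw [← iUnion_simplexPiece a u b n, integral_iUnion_ae
    (fun k : Fin (n + 1) => (measurableSet_simplexPiece a u b n k).nullMeasurableSet)
    (pairwise_aedisjoint_simplexPiece a u b n), tsum_fintype]
  · exact Finset.sum_congr rfl fun k _ =>
      setIntegral_simplexPiece_prod hau hub (Nat.add_sub_of_le (Nat.lt_succ_iff.mp k.isLt)) g
  · rw [iUnion_simplexPiece]
    exact integrableOn_simplex_prod hg

end IteratedIntegral

theorem iUnion_preimage_perm_simplex (c e : ℝ) (n : ℕ) :
    ⋃ ν : Equiv.Perm (Fin n), (fun (z : Fin n → ℝ) i => z (ν.symm i)) ⁻¹' simplex c e n =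
      univ.pi fun _ => Icc c e := by
  refine Subset.antisymm (iUnion_subset fun ν z hz i _ => by simpa using hz.1 (ν i)) ?_
  intro z hz
  refine mem_iUnion.2 ⟨(Tuple.sort z).symm, fun i => hz _ (mem_univ _), ?_⟩
  exact Tuple.monotone_sort z

theorem pairwise_aedisjoint_preimage_perm_simplex (c e : ℝ) (n : ℕ) :
    Pairwise (Function.onFun (AEDisjoint volume)
      fun ν : Equiv.Perm (Fin n) => (fun (z : Fin n → ℝ) i => z (ν.symm i)) ⁻¹' simplex c e n) := by
  intro ν μ hνμ
  refine measure_mono_null (fun z ⟨hν, hμ⟩ => ?_) (volume_setOf_not_injective n)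
  intro hz
  have := Tuple.unique_monotone (f := z) (σ := ν.symm) (τ := μ.symm) hν.2 hμ.2
  exact hνμ <| inv_injective (Equiv.ext fun i => hz (congrFun this i))

theorem sum_perm_setIntegral_simplex {E : Type*} [NormedAddCommGroup E] [NormedSpace ℝ E]
    {n : ℕ} (c e : ℝ) {h : (Fin n → ℝ) → E} (hh : IntegrableOn h (univ.pi fun _ => Icc c e)) :
    ∑ ν : Equiv.Perm (Fin n), ∫ y in simplex c e n, h (fun i => y (ν i)) =
      ∫ z in univ.pi (fun _ => Icc c e), h z := by
  set S : Equiv.Perm (Fin n) → Set (Fin n → ℝ) :=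
    fun ν => (fun (z : Fin n → ℝ) i => z (ν.symm i)) ⁻¹' simplex c e n
  have hS : ∀ ν, MeasurableSet (S ν) := fun ν =>
    measurableSet_simplex c e n |>.preimage (measurable_pi_lambda _ fun i => measurable_pi_apply _)
  have hchange : ∀ ν, ∫ y in simplex c e n, h (fun i => y (ν i)) = ∫ z in S ν, h z := by
    intro ν
    let φ := MeasurableEquiv.piCongrLeft (fun _ : Fin n => ℝ) ν.symm
    have hφ : ∀ y, φ y = fun i => y (ν i) := fun y => funext fun i => by
      simpa using MeasurableEquiv.piCongrLeft_apply_apply (β := fun _ => ℝ) ν.symm y (ν i)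
    have hpre : φ ⁻¹' S ν = simplex c e n := by ext y; simp [S, hφ]
    calc ∫ y in simplex c e n, h (fun i => y (ν i)) = ∫ y in φ ⁻¹' S ν, h (φ y) := by
          simp only [hpre, hφ]
      _ = ∫ z in S ν, h z :=
          (volume_measurePreserving_piCongrLeft _ ν.symm).setIntegral_preimage_emb
            φ.measurableEmbedding h (S ν)
  rw [← iUnion_preimage_perm_simplex c e n, integral_iUnion_ae (fun ν => (hS ν).nullMeasurableSet)
    (pairwise_aedisjoint_preimage_perm_simplex c e n), tsum_fintype]
  · exact Finset.sum_congr rfl fun ν _ => hchange ν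
  · rwa [iUnion_preimage_perm_simplex]

theorem sum_perm_setIntegral_simplex2 {n : ℕ} {f : Fin n → ℝ × ℝ → ℝ}
    (hf : ∀ i, Continuous (f i)) (a b c e : ℝ) :
    ∑ ν : Equiv.Perm (Fin n), ∫ p in simplex2 a b c e n, ∏ i, f i (p.1 i, p.2 (ν i)) =
      ∫ r in simplex a b n, ∏ i, ∫ y in Icc c e, f i (r i, y) := by
  have hF : ∀ ν : Equiv.Perm (Fin n), IntegrableOn (fun p : (Fin n → ℝ) × (Fin n → ℝ) =>
      ∏ i, f i (p.1 i, p.2 (ν i))) (simplex a b n ×ˢ simplex c e n) := fun ν =>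
    (Continuous.continuousOn (by fun_prop)).integrableOn_compact
      ((isCompact_simplex a b n).prod (isCompact_simplex c e n))
  have hcube : ∀ r : Fin n → ℝ, ∫ z in univ.pi (fun _ => Icc c e), ∏ i, f i (r i, z i) =
      ∏ i, ∫ y in Icc c e, f i (r i, y) := by
    intro r
    rw [volume_pi, Measure.restrict_pi_pi, integral_fintype_prod_eq_prod (fun i y => f i (r i, y))]
  calc ∑ ν : Equiv.Perm (Fin n), ∫ p in simplex2 a b c e n, ∏ i, f i (p.1 i, p.2 (ν i))
      = ∑ ν : Equiv.Perm (Fin n), ∫ r in simplex a b n, ∫ y in simplex c e n,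
          ∏ i, f i (r i, y (ν i)) := by
        refine Finset.sum_congr rfl fun ν _ => ?_
        rw [Measure.volume_eq_prod] at hF ⊢
        exact setIntegral_prod _ (hF ν)
    _ = ∫ r in simplex a b n, ∑ ν : Equiv.Perm (Fin n), ∫ y in simplex c e n,
          ∏ i, f i (r i, y (ν i)) := by
        refine (integral_finsetSum _ fun ν _ => ?_).symm
        have := hF ν
        rw [IntegrableOn, Measure.volume_eq_prod, ← Measure.prod_restrict] at this
        exact this.integral_prod_left
    _ = ∫ r in simplex a b n, ∏ i, ∫ y in Icc c e, f i (r i, y) := by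
        refine setIntegral_congr_fun (measurableSet_simplex a b n) fun r _ => ?_
        rw [← hcube, sum_perm_setIntegral_simplex c e (h := fun z => ∏ i, f i (r i, z i))]
        exact (Continuous.continuousOn (by fun_prop)).integrableOn_compact
          (isCompact_univ_pi fun _ => isCompact_Icc)

theorem d12_eq_fderiv_fderiv {f : ℝ × ℝ → ℝ} (hf : ContDiff ℝ 2 f) (p : ℝ × ℝ) :
    d12 f p = fderiv ℝ (fun q => fderiv ℝ f q (0, 1)) p (1, 0) := by
  have hf₁ : Differentiable ℝ f := hf.differentiable (by norm_num)
  have hf₂ : Differentiable ℝ fun q => fderiv ℝ f q (0, 1) :=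
    ((hf.fderiv_right le_rfl).clm_apply contDiff_const).differentiable one_ne_zero
  have hinner : (fun a => deriv (fun b => f (a, b)) p.2) = fun a => fderiv ℝ f (a, p.2) (0, 1) :=
    funext fun a => ((hf₁ _).hasFDerivAt.comp_hasDerivAt p.2
      ((hasDerivAt_const p.2 a).prodMk (hasDerivAt_id p.2))).deriv
  rw [d12, hinner]
  exact ((hf₂ _).hasFDerivAt.comp_hasDerivAt p.1
    ((hasDerivAt_id p.1).prodMk (hasDerivAt_const p.1 p.2))).deriv

theorem ContDiff.continuous_d12 {f : ℝ × ℝ → ℝ} (hf : ContDiff ℝ 2 f) : Continuous (d12 f) := by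
  have : ContDiff ℝ 1 fun q => fderiv ℝ f q (0, 1) :=
    (hf.fderiv_right le_rfl).clm_apply contDiff_const
  rw [funext (d12_eq_fderiv_fderiv hf)]
  exact ((this.fderiv_right (m := 0) le_rfl).clm_apply contDiff_const).continuous

theorem sigSym_eq_setIntegral_simplex {d n : ℕ} {X : Fin d → ℝ × ℝ → ℝ}
    (hX : ∀ j, Continuous (d12 (X j))) (s1 s2 t1 t2 : ℝ) (w : Fin n → Fin d) :
    sigSym X s1 s2 t1 t2 w =
      ∫ r in simplex s1 t1 n, ∏ i, ∫ y in Icc s2 t2, d12 (X (w i)) (r i, y) :=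
  sum_perm_setIntegral_simplex2 (fun i => hX (w i)) s1 t1 s2 t2

/-- Chen's relation for the symmetrized 2D signature in the first
(horizontal) direction: for `s₁ ≤ u₁ ≤ t₁`,
`⟨S^Sym_{s,t}, w⟩ = ∑_{k=0}^n ⟨S^Sym_{(s₁,s₂),(u₁,t₂)}, w₁⋯w_k⟩ ⟨S^Sym_{(u₁,s₂),(t₁,t₂)}, w_{k+1}⋯w_n⟩`,
with empty-word coefficients equal to 1. -/
theorem stmt14 {d : ℕ} (X : Fin d → ℝ × ℝ → ℝ) (hX : ∀ i, ContDiff ℝ 2 (X i))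
    {n : ℕ} (w : Fin n → Fin d)
    (s1 s2 u1 t1 t2 : ℝ) (hsu : s1 ≤ u1) (hut : u1 ≤ t1) :
    sigSym X s1 s2 t1 t2 w =
      ∑ k : Fin (n + 1),
        sigSym X s1 s2 u1 t2
            (fun i : Fin (k : ℕ) => w (Fin.castLE (Nat.lt_succ_iff.mp k.isLt) i)) *
        sigSym X u1 s2 t1 t2
            (fun j : Fin (n - (k : ℕ)) =>
              w ⟨(k : ℕ) + (j : ℕ), by have := j.isLt; have := k.isLt; omega⟩) := by
  have hd : ∀ j, Continuous (d12 (X j)) := fun j => (hX j).continuous_d12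
  have hg : ∀ j, IntegrableOn (fun x => ∫ y in Icc s2 t2, d12 (X j) (x, y)) (Icc s1 t1) :=
    fun j => (continuous_parametric_integral_of_continuous (f := fun x y => d12 (X j) (x, y))
      (hd j) isCompact_Icc).integrableOn_Icc
  simp only [sigSym_eq_setIntegral_simplex hd]
  exact setIntegral_simplex_prod_eq_sum hsu hut fun i => hg (w i)
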